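/- Let a and n be integers with a ≥ 5, n ≥ 3, a(n−2) ≥ 4n, and either a ≡ 0 (mod 4), or (a ≡ 1 and n ≡ 2 (mod 4)), or (a ≡ 2 and n ≡ 0 (mod 2)), or (a ≡ 3 and n ≡ 2 (mod 4)). Then the Sylvester number (genus) of the triple {S_{a,n}, S_{a,n+1}, S_{a,n+2}} equals (1/8)·((a²+16a−16)n³ − 12a·n² − (4a²+14a−24)n + 4a − 8). -/

import Mathlib

/-- The 2-step star number `S_{a,n} = a·n·(n−2) + 1`. -/
def twoStepStar (a n : ℕ) : ℕ := a * n * (n - 2) + 1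

/-- The Sylvester number (genus) of a set `A` of natural numbers: the number of nonnegative
integers that are not a nonnegative integer linear combination of elements of `A`. -/
noncomputable def sylvesterNumber (A : Set ℕ) : ℕ :=
  Set.ncard {m : ℕ | m ∉ AddSubmonoid.closure A}

/-!
Put `c = a(n-2)/4 = n + e`, so that `s = S_{a,n} = 4nc + 1`, `t = S_{a,n+1} = s + a(2n-1)` and
`u = S_{a,n+2} = s + 4an`. The relations `4n·t = (2n-1)u + (2n+1)s`,
`(2n-1)t + (e+1)u = (a+e+2n)s` and `(2n+e)u = (2n+1)t + (a+e-1)s` push every `xt + yu` into the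
L-shaped box `[0,2n-1) × [0,2n+e) ∪ [2n-1,4n) × [0,e]` without increasing it or changing its class
mod `s`. The box has exactly `s` points and `⟨s, t, u⟩` meets every class mod `s`, so the values
`xt + yu` on the box form the Apéry set of `s`, and Selmer's formula
`g·s = ∑ Ap - s(s-1)/2` gives the genus.
-/

open Finset

section Apery

variable {ι : Type*} {S : AddSubmonoid ℕ} {s : ℕ} {R : Finset ι} {ν : ι → ℕ}

lemma image_mod_eq_range (hs : 0 < s) (hcofinite : ∃ N, ∀ m ≥ N, m ∈ S)
    (hred : ∀ w ∈ S, ∃ i ∈ R, ν i ≤ w ∧ ν i ≡ w [MOD s]) :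
    R.image (fun i => ν i % s) = range s := by
  obtain ⟨N, hN⟩ := hcofinite
  ext r
  simp only [mem_image, mem_range]
  refine ⟨fun ⟨i, _, hi⟩ => hi ▸ Nat.mod_lt (ν i) hs, fun hr => ?_⟩
  obtain ⟨i, hi, -, hmod⟩ := hred (r + N * s) (hN _ (le_add_left (Nat.le_mul_of_pos_right N hs)))
  exact ⟨i, hi, by rw [hmod, Nat.add_mul_mod_self_right, Nat.mod_eq_of_lt hr]⟩

lemma le_of_modEq_of_injOn (hinj : Set.InjOn (fun i => ν i % s) R)
    (hred : ∀ w ∈ S, ∃ i ∈ R, ν i ≤ w ∧ ν i ≡ w [MOD s]) {i : ι} {w : ℕ} (hi : i ∈ R)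
    (hw : w ∈ S) (hmod : w ≡ ν i [MOD s]) : ν i ≤ w := by
  obtain ⟨j, hj, hle, hjw⟩ := hred w hw
  rwa [hinj hi hj (hmod.symm.trans hjw.symm)]

lemma setOf_notMem_eq_biUnion (hsS : s ∈ S) (hR : ∀ i ∈ R, ν i ∈ S)
    (hres : ∀ w, ∃ i ∈ R, ν i ≡ w [MOD s])
    (hmin : ∀ i ∈ R, ∀ w ∈ S, w ≡ ν i [MOD s] → ν i ≤ w) :
    {w | w ∉ S} = ↑(R.biUnion fun i => (range (ν i)).filter (· ≡ ν i [MOD s])) := by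
  ext w
  simp only [Set.mem_ofPred_eq, coe_biUnion, coe_filter, mem_range, Set.mem_iUnion, mem_coe]
  constructor
  · intro hw
    obtain ⟨i, hi, hiw⟩ := hres w
    refine ⟨i, hi, ?_, hiw.symm⟩
    by_contra! hle
    obtain ⟨k, hk⟩ := (Nat.modEq_iff_dvd' hle).mp hiw
    refine hw ?_
    rw [← Nat.add_sub_of_le hle, hk]
    exact add_mem (hR i hi) (by simpa [mul_comm] using nsmul_mem hsS k)
  · rintro ⟨i, hi, hlt, hwi⟩ hw
    exact (hmin i hi w hw hwi).not_gt hlt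

/-- Selmer's formula: under these hypotheses `ν` parametrizes the Apéry set of `s` in `S`. -/
theorem ncard_notMem_mul_add_sum_range (hs : 0 < s) (hsS : s ∈ S)
    (hcofinite : ∃ N, ∀ m ≥ N, m ∈ S) (hR : ∀ i ∈ R, ν i ∈ S) (hcard : R.card = s)
    (hred : ∀ w ∈ S, ∃ i ∈ R, ν i ≤ w ∧ ν i ≡ w [MOD s]) :
    {w | w ∉ S}.ncard * s + ∑ r ∈ range s, r = ∑ i ∈ R, ν i := by
  classical
  have himg := image_mod_eq_range hs hcofinite hred
  have hinj : Set.InjOn (fun i => ν i % s) R :=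
    injOn_of_card_image_eq (by rw [himg, card_range, hcard])
  have hres : ∀ w, ∃ i ∈ R, ν i ≡ w [MOD s] := fun w =>
    mem_image.mp (himg ▸ mem_range.mpr (Nat.mod_lt w hs))
  have hdisj : (R : Set ι).PairwiseDisjoint
      fun i => (range (ν i)).filter (· ≡ ν i [MOD s]) := by
    intro i hi j hj hne
    refine disjoint_left.mpr fun w hwi hwj => hne (hinj hi hj ?_)
    exact ((mem_filter.mp hwi).2.symm.trans (mem_filter.mp hwj).2 : ν i ≡ ν j [MOD s])
  rw [setOf_notMem_eq_biUnion hsS hR hres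
      (fun i hi w hw => le_of_modEq_of_injOn hinj hred hi hw),
    Set.ncard_coe_finset, card_biUnion hdisj, ← himg, sum_image hinj, sum_mul, ← sum_add_distrib]
  refine sum_congr rfl fun i _ => ?_
  rw [← Nat.count_eq_card_filter_range, Nat.count_modEq_card _ hs, if_neg (lt_irrefl _),
    add_zero, Nat.div_add_mod']

end Apery

theorem AddSubmonoid.mem_closure_triple {s t u w : ℕ} :
    w ∈ closure {s, t, u} ↔ ∃ z x y : ℕ, z * s + x * t + y * u = w := by
  rw [Set.insert_eq, closure_union, mem_sup]
  simp only [mem_closure_singleton, mem_closure_pair, smul_eq_mul]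
  constructor
  · rintro ⟨_, ⟨z, rfl⟩, _, ⟨x, y, rfl⟩, rfl⟩
    exact ⟨z, x, y, by ring⟩
  · rintro ⟨z, x, y, rfl⟩
    exact ⟨_, ⟨z, rfl⟩, _, ⟨x, y, rfl⟩, by ring⟩

lemma sum_range_natCast_mul_two {R : Type*} [CommRing R] (m : ℕ) :
    (∑ i ∈ range m, (i : R)) * 2 = m * (m - 1) := by
  induction m with
  | zero => simp
  | succ m ih => rw [sum_range_succ, add_mul, ih]; push_cast; ring

namespace TwoStepStar

def base (n e : ℕ) : ℕ := 4 * n * (n + e) + 1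

def gen₁ (a n e : ℕ) : ℕ := base n e + a * (2 * n - 1)

def gen₂ (a n e : ℕ) : ℕ := base n e + a * (4 * n)

def box (n e : ℕ) : Finset (ℕ × ℕ) :=
  range (2 * n - 1) ×ˢ range (2 * n + e) ∪ Ico (2 * n - 1) (4 * n) ×ˢ range (e + 1)

def apery (a n e : ℕ) (p : ℕ × ℕ) : ℕ := p.1 * gen₁ a n e + p.2 * gen₂ a n e

variable {a n e : ℕ}

lemma mem_box {p : ℕ × ℕ} :
    p ∈ box n e ↔ p.1 < 2 * n - 1 ∧ p.2 < 2 * n + e ∨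
      2 * n - 1 ≤ p.1 ∧ p.1 < 4 * n ∧ p.2 < e + 1 := by
  simp [box, and_assoc]

lemma disjoint_box (n e : ℕ) :
    Disjoint (range (2 * n - 1) ×ˢ range (2 * n + e)) (Ico (2 * n - 1) (4 * n) ×ˢ range (e + 1)) :=
  disjoint_left.mpr fun p hp hp' => by simp only [mem_product, mem_range, mem_Ico] at hp hp'; omega

lemma card_box (hn : 0 < n) : (box n e).card = base n e := by
  obtain ⟨k, rfl⟩ : ∃ k, n = k + 1 := ⟨n - 1, by omega⟩
  rw [box, card_union_of_disjoint (disjoint_box _ _)]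
  simp only [card_product, card_range, Nat.card_Ico, base,
    show 2 * (k + 1) - 1 = 2 * k + 1 by omega, show 4 * (k + 1) - (2 * k + 1) = 2 * k + 3 by omega]
  ring

lemma four_mul_mul_gen₁ (hn : 0 < n) :
    4 * n * gen₁ a n e = (2 * n - 1) * gen₂ a n e + (2 * n + 1) * base n e := by
  obtain ⟨k, rfl⟩ : ∃ k, n = k + 1 := ⟨n - 1, by omega⟩
  simp only [gen₁, gen₂, show 2 * (k + 1) - 1 = 2 * k + 1 by omega]
  ring

lemma mul_gen₂ (ha : 0 < a) (hn : 0 < n) :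
    (2 * n + e) * gen₂ a n e = (2 * n + 1) * gen₁ a n e + (a + e - 1) * base n e := by
  obtain ⟨k, rfl⟩ : ∃ k, n = k + 1 := ⟨n - 1, by omega⟩
  obtain ⟨b, rfl⟩ : ∃ b, a = b + 1 := ⟨a - 1, by omega⟩
  simp only [gen₁, gen₂, base, show 2 * (k + 1) - 1 = 2 * k + 1 by omega,
    show b + 1 + e - 1 = b + e by omega]
  ring

lemma mul_gen₁_add_mul_gen₂ (hn : 0 < n) :
    (2 * n - 1) * gen₁ a n e + (e + 1) * gen₂ a n e = (a + e + 2 * n) * base n e := by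
  obtain ⟨k, rfl⟩ : ∃ k, n = k + 1 := ⟨n - 1, by omega⟩
  simp only [gen₁, gen₂, base, show 2 * (k + 1) - 1 = 2 * k + 1 by omega]
  ring

lemma exists_mem_box_le_modEq (ha : 0 < a) (hn : 0 < n) (x y : ℕ) :
    ∃ p ∈ box n e, apery a n e p ≤ x * gen₁ a n e + y * gen₂ a n e ∧
      apery a n e p ≡ x * gen₁ a n e + y * gen₂ a n e [MOD base n e] := by
  set s := base n e
  set t := gen₁ a n e
  set u := gen₂ a n e
  -- `mul_gen₂` need not decrease `x * t + y * u` (it does not when `a + e = 1`), hence the `+ y`.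
  induction hm : x * t + y * u + y using Nat.strong_induction_on generalizing x y with
  | _ m ih =>
  have descend : ∀ x' y' k, x * t + y * u = x' * t + y' * u + k * s →
      y' < y + k * s →
      ∃ p ∈ box n e, apery a n e p ≤ x * t + y * u ∧ apery a n e p ≡ x * t + y * u [MOD s] := by
    intro x' y' k hv hy'
    obtain ⟨p, hp, hle, hmod⟩ := ih _ (by omega) x' y' rfl
    exact ⟨p, hp, by omega, hv ▸ Nat.modEq_add_mul_modulus_iff.mpr hmod⟩
  by_cases hx : 4 * n ≤ x
  · obtain ⟨x, rfl⟩ := Nat.exists_eq_add_of_le hx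
    have : 2 * n + 1 ≤ (2 * n + 1) * s := Nat.le_mul_of_pos_right _ (Nat.succ_pos _)
    refine descend x (y + (2 * n - 1)) (2 * n + 1) ?_ (by omega)
    rw [add_mul, four_mul_mul_gen₁ hn]; ring
  by_cases hxy : 2 * n - 1 ≤ x ∧ e + 1 ≤ y
  · obtain ⟨x, rfl⟩ := Nat.exists_eq_add_of_le hxy.1
    obtain ⟨y, rfl⟩ := Nat.exists_eq_add_of_le hxy.2
    refine descend x y (a + e + 2 * n) ?_ (by omega)
    rw [← mul_gen₁_add_mul_gen₂ hn]; ring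
  by_cases hy : 2 * n + e ≤ y
  · obtain ⟨y, rfl⟩ := Nat.exists_eq_add_of_le hy
    refine descend (x + (2 * n + 1)) y (a + e - 1) ?_ (by omega)
    rw [add_mul _ _ u, mul_gen₂ ha hn]; ring
  exact ⟨(x, y), mem_box.mpr (by omega), le_rfl, rfl⟩

lemma exists_mem_box_le_modEq_of_mem (ha : 0 < a) (hn : 0 < n) {w : ℕ}
    (hw : w ∈ AddSubmonoid.closure {base n e, gen₁ a n e, gen₂ a n e}) :
    ∃ p ∈ box n e, apery a n e p ≤ w ∧ apery a n e p ≡ w [MOD base n e] := by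
  obtain ⟨z, x, y, rfl⟩ := AddSubmonoid.mem_closure_triple.mp hw
  obtain ⟨p, hp, hle, hmod⟩ := exists_mem_box_le_modEq ha hn x y
  refine ⟨p, hp, by omega, ?_⟩
  rw [add_assoc, add_comm]
  exact hmod.trans (Nat.modEq_add_mul_modulus_iff.mpr rfl)

lemma setGcd_eq_one (hn : 0 < n) (hcop : Nat.Coprime a (base n e)) :
    Nat.setGcd {base n e, gen₁ a n e, gen₂ a n e} = 1 := by
  set d := Nat.setGcd {base n e, gen₁ a n e, gen₂ a n e}
  have hs : d ∣ base n e := Nat.setGcd_dvd_of_mem (by simp)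
  have ht : d ∣ gen₁ a n e := Nat.setGcd_dvd_of_mem (by simp)
  have hu : d ∣ gen₂ a n e := Nat.setGcd_dvd_of_mem (by simp)
  have hda : Nat.Coprime d a := hcop.symm.coprime_dvd_left hs
  have hodd : d ∣ 2 * n - 1 := hda.dvd_of_dvd_mul_left ((Nat.dvd_add_right hs).mp ht)
  have heven : d ∣ 4 * n := hda.dvd_of_dvd_mul_left ((Nat.dvd_add_right hs).mp hu)
  have htwo : d ∣ 2 := by
    have := Nat.dvd_sub heven (dvd_mul_of_dvd_right hodd 2)
    rwa [show 4 * n - 2 * (2 * n - 1) = 2 by omega] at this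
  have hbase : base n e = 2 * (2 * n * (n + e)) + 1 := by rw [base]; ring
  rw [hbase] at hs
  exact Nat.dvd_one.mp ((Nat.dvd_add_right (dvd_mul_of_dvd_left htwo _)).mp hs)

lemma two_mul_sum_apery (hn : 0 < n) :
    2 * ((∑ p ∈ box n e, apery a n e p : ℕ) : ℤ) =
      gen₁ a n e * ((2 * n + e) * (2 * n - 1) * (2 * n - 2) + (e + 1) * (2 * n + 1) * (6 * n - 2))
      + gen₂ a n e * ((2 * n - 1) * (2 * n + e) * (2 * n + e - 1) + (2 * n + 1) * (e + 1) * e) := by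
  have h1 : 1 ≤ 2 * n := by omega
  have h2 : 2 * n - 1 ≤ 4 * n := by omega
  rw [box, sum_union (disjoint_box n e)]
  simp only [apery, sum_product, sum_add_distrib, sum_const, card_range, Nat.card_Ico,
    ← sum_mul, smul_eq_mul]
  push_cast
  rw [sum_Ico_eq_sub _ h2]
  simp only [← mul_sum]
  have g₁ := sum_range_natCast_mul_two (R := ℤ) (2 * n - 1)
  have g₂ := sum_range_natCast_mul_two (R := ℤ) (2 * n + e)
  have g₃ := sum_range_natCast_mul_two (R := ℤ) (4 * n)
  have g₄ := sum_range_natCast_mul_two (R := ℤ) (e + 1)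
  push_cast [Nat.cast_sub h1, Nat.cast_sub h2] at g₁ g₂ g₃ g₄ ⊢
  linear_combination ((2 * n - 1) * gen₁ a n e : ℤ) * g₁ + ((2 * n - 1) * gen₂ a n e : ℤ) * g₂
    + ((e + 1) * gen₁ a n e : ℤ) * g₃ + ((2 * n + 1) * gen₂ a n e : ℤ) * g₄

theorem sylvesterNumber_eq (hn : 0 < n) (hcop : Nat.Coprime a (base n e)) :
    (sylvesterNumber {base n e, gen₁ a n e, gen₂ a n e} : ℤ) =
      2 * n * e ^ 2 + (12 * n ^ 2 - 6 * n + 1) * e + 8 * n ^ 3 - 6 * n ^ 2 + 4 * n - 1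
        + a * (2 * n * e + (2 * n - 1) * (3 * n - 1)) := by
  have ha : 0 < a := Nat.pos_of_ne_zero fun h => by
    simp only [h, Nat.coprime_zero_left, base] at hcop
    have : 0 < 4 * n * (n + e) := by positivity
    omega
  have hs : 0 < base n e := Nat.succ_pos _
  have hcofinite : ∃ N, ∀ m ≥ N, m ∈ AddSubmonoid.closure {base n e, gen₁ a n e, gen₂ a n e} := by
    obtain ⟨N, hN⟩ := Nat.exists_mem_closure_of_ge {base n e, gen₁ a n e, gen₂ a n e}
    exact ⟨N, fun m hm => hN m hm (by rw [setGcd_eq_one hn hcop]; exact one_dvd m)⟩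
  have hselmer := ncard_notMem_mul_add_sum_range hs (AddSubmonoid.subset_closure (by simp))
    hcofinite (fun p _ => AddSubmonoid.mem_closure_triple.mpr ⟨0, p.1, p.2, by simp [apery]⟩)
    (card_box hn) fun _ => exists_mem_box_le_modEq_of_mem ha hn
  have hgauss := sum_range_natCast_mul_two (R := ℤ) (base n e)
  have hsum := two_mul_sum_apery (a := a) (e := e) hn
  have hs0 : (2 * base n e : ℤ) ≠ 0 := by positivity
  apply mul_left_cancel₀ hs0
  rw [← hselmer] at hsum
  rw [sylvesterNumber]
  have h1 : 1 ≤ 2 * n := by omega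
  simp only [gen₁, gen₂, base] at hsum hgauss ⊢
  push_cast [Nat.cast_sub h1] at hsum hgauss ⊢
  linear_combination hsum - hgauss

end TwoStepStar

lemma four_dvd_mul_sub_two {a n : ℕ} (hmod : a % 4 = 0 ∨ (a % 4 = 1 ∧ n % 4 = 2) ∨
    (a % 4 = 2 ∧ n % 2 = 0) ∨ (a % 4 = 3 ∧ n % 4 = 2)) : 4 ∣ a * (n - 2) := by
  rcases hmod with h | ⟨-, h⟩ | ⟨ha, hn⟩ | ⟨-, h⟩
  · exact dvd_mul_of_dvd_left (by omega) _
  · exact dvd_mul_of_dvd_right (by omega) _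
  · exact mul_dvd_mul (show 2 ∣ a by omega) (show 2 ∣ n - 2 by omega)
  · exact dvd_mul_of_dvd_right (by omega) _

lemma twoStepStar_succ {a n : ℕ} (hn : 2 ≤ n) :
    twoStepStar a (n + 1) = twoStepStar a n + a * (2 * n - 1) := by
  obtain ⟨k, rfl⟩ := Nat.exists_eq_add_of_le hn
  simp only [twoStepStar, show 2 + k + 1 - 2 = k + 1 by omega, show 2 + k - 2 = k by omega,
    show 2 * (2 + k) - 1 = 2 * k + 3 by omega]
  ring

lemma twoStepStar_add_two {a n : ℕ} (hn : 2 ≤ n) :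
    twoStepStar a (n + 2) = twoStepStar a n + a * (4 * n) := by
  obtain ⟨k, rfl⟩ := Nat.exists_eq_add_of_le hn
  simp only [twoStepStar, show 2 + k + 2 - 2 = k + 2 by omega, show 2 + k - 2 = k by omega]
  ring

theorem sylvester_twoStepStar_case2_general (a n : ℕ) (hn : 3 ≤ n) (hbig : 4 * n ≤ a * (n - 2)) (hmod : a % 4 = 0 ∨ (a % 4 = 1 ∧ n % 4 = 2) ∨ (a % 4 = 2 ∧ n % 2 = 0) ∨ (a % 4 = 3 ∧ n % 4 = 2)) :
    (sylvesterNumber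
        {twoStepStar a n, twoStepStar a (n + 1), twoStepStar a (n + 2)} : ℚ) =
      (((a : ℚ) ^ 2 + 16 * a - 16) * n ^ 3 - 12 * (a : ℚ) * n ^ 2 - (4 * (a : ℚ) ^ 2 + 14 * a - 24) * n + 4 * a - 8) / 8 := by
  obtain ⟨c, hc⟩ := four_dvd_mul_sub_two hmod
  obtain ⟨e, rfl⟩ : ∃ e, c = n + e := ⟨c - n, by omega⟩
  have hbase : twoStepStar a n = TwoStepStar.base n e := by
    rw [twoStepStar, mul_right_comm, hc, TwoStepStar.base]; ring
  have hcop : Nat.Coprime a (TwoStepStar.base n e) := by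
    rw [← hbase, twoStepStar, mul_assoc, Nat.coprime_mul_left_add_right]
    exact Nat.coprime_one_right a
  have he : (e : ℚ) = a * (n - 2) / 4 - n := by
    have : (a : ℚ) * ((n - 2 : ℕ) : ℚ) = 4 * (n + e) := by exact_mod_cast hc
    rw [Nat.cast_sub (by omega)] at this
    push_cast at this
    linarith
  have hgenus := congrArg (Int.cast : ℤ → ℚ) (TwoStepStar.sylvesterNumber_eq (by omega) hcop)
  push_cast [TwoStepStar.gen₁, TwoStepStar.gen₂] at hgenus
  rw [twoStepStar_succ (by omega), twoStepStar_add_two (by omega), hbase, hgenus, he]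
  ring

theorem sylvester_twoStepStar_case2 (a n : ℕ) (ha : 5 ≤ a) (hn : 3 ≤ n) (hbig : 4 * n ≤ a * (n - 2)) (hmod : a % 4 = 0 ∨ (a % 4 = 1 ∧ n % 4 = 2) ∨ (a % 4 = 2 ∧ n % 2 = 0) ∨ (a % 4 = 3 ∧ n % 4 = 2)) :
    (sylvesterNumber
        {twoStepStar a n, twoStepStar a (n + 1), twoStepStar a (n + 2)} : ℚ) =
      (((a : ℚ) ^ 2 + 16 * a - 16) * n ^ 3 - 12 * (a : ℚ) * n ^ 2 - (4 * (a : ℚ) ^ 2 + 14 * a - 24) * n + 4 * a - 8) / 8 :=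
  sylvester_twoStepStar_case2_general a n hn hbig hmod
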